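/- The set S_ν of covariance matrices of Bayesian posterior-mean estimators achievable by some signaling policy from a prior ν (centered, covariance I_n) is convex: if Σ₁ and Σ₂ are covariances of random vectors x̂₁, x̂₂ satisfying E[x | x̂ᵢ] = x̂ᵢ (i = 1,2), then for any t ∈ [0,1], tΣ₁ + (1−t)Σ₂ is the covariance of a random vector x̂ satisfying E[x | x̂] = x̂, obtained by randomizing between the two with probability t. -/

import Mathlib

open MeasureTheory

private lemma memLp_of_condexp_ae_eq {Ω : Type} {m m0 : MeasurableSpace Ω} {μ : Measure Ω}
    (hprob : IsProbabilityMeasure μ) (hm : m ≤ m0) {f g : Ω → ℝ}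
    (hf : MemLp f 2 μ) (hfg : μ[f|m] =ᵐ[μ] g) : MemLp g 2 μ := by
  haveI := hprob
  have h1 := integrable_condExpL2_of_isFiniteMeasure (𝕜 := ℝ) (f := hf.toLp f) hm
  have hsm := aestronglyMeasurable_condExpL2 (𝕜 := ℝ) hm (hf.toLp f)
  have hcl2 := ae_eq_condExp_of_forall_setIntegral_eq (f := f) hm (hf.integrable one_le_two)
      (fun s hs hμs => h1.integrableOn)
      (fun s hs hμs => by
        rw [integral_condExpL2_eq (𝕜 := ℝ) hm (hf.toLp f) hs hμs.ne]
        exact setIntegral_congr_ae (hm s hs) ((hf.coeFn_toLp).mono fun ω h _ => h))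
      hsm
  exact (Lp.memLp _).ae_eq (hcl2.trans hfg)

private lemma mix_integral {Ω : Type} [MeasurableSpace Ω] (ρ₁ ρ₂ : Measure Ω) {t : ℝ}
    (ht0 : 0 ≤ t) (ht1 : t ≤ 1) (g : Bool × Ω → ℝ) (hg : Measurable g)
    (h1 : Integrable (fun ω => g (true, ω)) ρ₁) (h2 : Integrable (fun ω => g (false, ω)) ρ₂) :
    ∫ p, g p ∂(ENNReal.ofReal t • ρ₁.map (Prod.mk true)
        + ENNReal.ofReal (1 - t) • ρ₂.map (Prod.mk false))
      = t * ∫ ω, g (true, ω) ∂ρ₁ + (1 - t) * ∫ ω, g (false, ω) ∂ρ₂ := by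
  have hι1 : Integrable g (ρ₁.map (Prod.mk true)) :=
    (integrable_map_measure hg.aestronglyMeasurable measurable_prodMk_left.aemeasurable).mpr h1
  have hι2 : Integrable g (ρ₂.map (Prod.mk false)) :=
    (integrable_map_measure hg.aestronglyMeasurable measurable_prodMk_left.aemeasurable).mpr h2
  rw [integral_add_measure (hι1.smul_measure ENNReal.ofReal_ne_top)
      (hι2.smul_measure ENNReal.ofReal_ne_top), integral_smul_measure, integral_smul_measure,
    integral_map measurable_prodMk_left.aemeasurable hg.aestronglyMeasurable,
    integral_map measurable_prodMk_left.aemeasurable hg.aestronglyMeasurable,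
    ENNReal.toReal_ofReal ht0, ENNReal.toReal_ofReal (by linarith), smul_eq_mul, smul_eq_mul]

private lemma mix_integrable {Ω : Type} [MeasurableSpace Ω] (ρ₁ ρ₂ : Measure Ω) {t : ℝ}
    (g : Bool × Ω → ℝ) (hg : Measurable g)
    (h1 : Integrable (fun ω => g (true, ω)) ρ₁) (h2 : Integrable (fun ω => g (false, ω)) ρ₂) :
    Integrable g (ENNReal.ofReal t • ρ₁.map (Prod.mk true)
        + ENNReal.ofReal (1 - t) • ρ₂.map (Prod.mk false)) := by
  have hι1 : Integrable g (ρ₁.map (Prod.mk true)) :=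
    (integrable_map_measure hg.aestronglyMeasurable measurable_prodMk_left.aemeasurable).mpr h1
  have hι2 : Integrable g (ρ₂.map (Prod.mk false)) :=
    (integrable_map_measure hg.aestronglyMeasurable measurable_prodMk_left.aemeasurable).mpr h2
  exact (hι1.smul_measure ENNReal.ofReal_ne_top).add_measure
    (hι2.smul_measure ENNReal.ofReal_ne_top)

/-- the set of achievable covariances of posterior-mean estimators is convex.
If `xhat₁, xhat₂` are estimators of `x` (mean `0`, covariance `Iₙ`) satisfying the self-consistency
property `E[x | xhatᵢ] = xhatᵢ`, then for `t ∈ [0,1]` there is a probability space carrying a copy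
`x'` of `x` and an estimator `xhat` with `E[x' | xhat] = xhat` whose covariance is
`tΣ₁ + (1−t)Σ₂`, obtained by randomizing between the two with probability `t`. -/
theorem stmt19 {n : ℕ} (Ω : Type) [MeasurableSpace Ω] (μ : Measure Ω) [IsProbabilityMeasure μ]
    (x x₁ x₂ : Ω → (Fin n → ℝ))
    (hx : Measurable x) (hx₁ : Measurable x₁) (hx₂ : Measurable x₂)
    (hmean : ∀ i, ∫ ω, x ω i ∂μ = 0)
    (hcov : ∀ i j, ∫ ω, x ω i * x ω j ∂μ = if i = j then (1 : ℝ) else 0)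
    (hc1 : ∀ i, μ[(fun ω => x ω i) | MeasurableSpace.comap x₁ inferInstance]
      =ᵐ[μ] fun ω => x₁ ω i)
    (hc2 : ∀ i, μ[(fun ω => x ω i) | MeasurableSpace.comap x₂ inferInstance]
      =ᵐ[μ] fun ω => x₂ ω i)
    (t : ℝ) (ht : t ∈ Set.Icc (0 : ℝ) 1) :
    ∃ (Ω' : Type) (_ : MeasurableSpace Ω') (μ' : Measure Ω')
      (x' xhat : Ω' → (Fin n → ℝ)),
      IsProbabilityMeasure μ' ∧ Measurable x' ∧ Measurable xhat ∧
      μ'.map x' = μ.map x ∧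
      (∀ i, μ'[(fun ω => x' ω i) | MeasurableSpace.comap xhat inferInstance]
        =ᵐ[μ'] fun ω => xhat ω i) ∧
      (∀ j k, ∫ ω, xhat ω j * xhat ω k ∂μ' =
        t * (∫ ω, x₁ ω j * x₁ ω k ∂μ) + (1 - t) * (∫ ω, x₂ ω j * x₂ ω k ∂μ)) := by
  obtain ⟨ht0, ht1⟩ := ht
  -- L² facts
  have hL2x : ∀ i, MemLp (fun ω => x ω i) 2 μ := by
    intro i
    have hma : AEStronglyMeasurable (fun ω => x ω i) μ :=
      ((measurable_pi_apply i).comp hx).aestronglyMeasurable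
    rw [memLp_two_iff_integrable_sq hma]
    by_contra hni
    have h0 : ∫ ω, x ω i * x ω i ∂μ = 0 := by
      rw [show (fun ω => x ω i * x ω i) = (fun ω => x ω i ^ 2) from funext fun ω => (sq _).symm]
      exact integral_undef hni
    rw [hcov i i] at h0
    simp at h0
  have hxint : ∀ i, Integrable (fun ω => x ω i) μ := fun i => (hL2x i).integrable one_le_two
  have hm₁ : MeasurableSpace.comap x₁ inferInstance ≤ _ := hx₁.comap_le
  have hm₂ : MeasurableSpace.comap x₂ inferInstance ≤ _ := hx₂.comap_le
  have hL2x₁ : ∀ i, MemLp (fun ω => x₁ ω i) 2 μ :=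
    fun i => memLp_of_condexp_ae_eq inferInstance hm₁ (hL2x i) (hc1 i)
  have hL2x₂ : ∀ i, MemLp (fun ω => x₂ ω i) 2 μ :=
    fun i => memLp_of_condexp_ae_eq inferInstance hm₂ (hL2x i) (hc2 i)
  have hx₁int : ∀ i, Integrable (fun ω => x₁ ω i) μ := fun i => (hL2x₁ i).integrable one_le_two
  have hx₂int : ∀ i, Integrable (fun ω => x₂ ω i) μ := fun i => (hL2x₂ i).integrable one_le_two
  have hmul : ∀ (f g : Ω → ℝ), MemLp f 2 μ → MemLp g 2 μ →
      Integrable (fun ω => f ω * g ω) μ := by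
    intro f g hf hg
    have h : MemLp (f • g) 1 μ := hg.smul hf
    exact memLp_one_iff_integrable.mp h
  -- the construction
  set c₁ : ENNReal := ENNReal.ofReal t with hc₁
  set c₂ : ENNReal := ENNReal.ofReal (1 - t) with hc₂
  set μ' : Measure (Bool × Ω) :=
    c₁ • μ.map (Prod.mk true) + c₂ • μ.map (Prod.mk false) with hμ'
  set x' : Bool × Ω → (Fin n → ℝ) := fun p => x p.2 with hx'def
  set xhat : Bool × Ω → (Fin n → ℝ) := fun p => cond p.1 (x₁ p.2) (x₂ p.2) with hxhatdef
  have hxhat_true : ∀ ω, xhat (true, ω) = x₁ ω := fun ω => rfl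
  have hxhat_false : ∀ ω, xhat (false, ω) = x₂ ω := fun ω => rfl
  have hx'm : Measurable x' := hx.comp measurable_snd
  have hxhatm : Measurable xhat := by
    have heq : xhat = fun p : Bool × Ω => if p.1 = true then x₁ p.2 else x₂ p.2 := by
      funext p; rcases p with ⟨b, ω⟩; cases b <;> simp [hxhatdef]
    rw [heq]
    exact Measurable.ite (measurable_fst (MeasurableSet.singleton true))
      (hx₁.comp measurable_snd) (hx₂.comp measurable_snd)
  have hc₁c₂ : c₁ + c₂ = 1 := by
    rw [hc₁, hc₂, ← ENNReal.ofReal_add ht0 (by linarith)]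
    norm_num
  have hμ'prob : IsProbabilityMeasure μ' := by
    constructor
    rw [hμ']
    simp only [Measure.add_apply, Measure.smul_apply, smul_eq_mul]
    rw [Measure.map_apply measurable_prodMk_left MeasurableSet.univ,
      Measure.map_apply measurable_prodMk_left MeasurableSet.univ]
    simpa using hc₁c₂
  refine ⟨Bool × Ω, inferInstance, μ', x', xhat, hμ'prob, hx'm, hxhatm, ?_, ?_, ?_⟩
  · -- map equality
    rw [hμ', Measure.map_add _ _ hx'm, Measure.map_smul, Measure.map_smul,
      Measure.map_map hx'm measurable_prodMk_left,
      Measure.map_map hx'm measurable_prodMk_left]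
    have h1 : x' ∘ Prod.mk true = x := rfl
    have h2 : x' ∘ Prod.mk false = x := rfl
    rw [h1, h2, ← add_smul, hc₁c₂, one_smul]
  · -- self-consistency
    intro i
    haveI := hμ'prob
    have hm' : MeasurableSpace.comap xhat inferInstance ≤ _ := hxhatm.comap_le
    have hfint : Integrable (fun p : Bool × Ω => x' p i) μ' :=
      mix_integrable μ μ (fun p => x' p i)
        ((measurable_pi_apply i).comp hx'm) (hxint i) (hxint i)
    have hgint : Integrable (fun p : Bool × Ω => xhat p i) μ' :=
      mix_integrable μ μ (fun p => xhat p i)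
        ((measurable_pi_apply i).comp hxhatm) (hx₁int i) (hx₂int i)
    refine (ae_eq_condExp_of_forall_setIntegral_eq hm' hfint
      (fun s _ _ => hgint.integrableOn) (fun s hs _ => ?_) ?_).symm
    · obtain ⟨B, hB, rfl⟩ := hs
      have hsm : MeasurableSet (xhat ⁻¹' B) := hxhatm hB
      have hpre1 : (Prod.mk true) ⁻¹' (xhat ⁻¹' B) = x₁ ⁻¹' B := rfl
      have hpre2 : (Prod.mk false) ⁻¹' (xhat ⁻¹' B) = x₂ ⁻¹' B := rfl
      have hres : μ'.restrict (xhat ⁻¹' B)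
          = c₁ • (μ.restrict (x₁ ⁻¹' B)).map (Prod.mk true)
            + c₂ • (μ.restrict (x₂ ⁻¹' B)).map (Prod.mk false) := by
        rw [hμ', Measure.restrict_add, Measure.restrict_smul, Measure.restrict_smul,
          Measure.restrict_map measurable_prodMk_left hsm,
          Measure.restrict_map measurable_prodMk_left hsm, hpre1, hpre2]
      have hA₁ : MeasurableSet[MeasurableSpace.comap x₁ inferInstance] (x₁ ⁻¹' B) := ⟨B, hB, rfl⟩
      have hA₂ : MeasurableSet[MeasurableSpace.comap x₂ inferInstance] (x₂ ⁻¹' B) := ⟨B, hB, rfl⟩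
      have e1 : ∫ ω in x₁ ⁻¹' B, x₁ ω i ∂μ = ∫ ω in x₁ ⁻¹' B, x ω i ∂μ := by
        rw [← setIntegral_condExp hm₁ (hxint i) hA₁]
        exact setIntegral_congr_ae (hm₁ _ hA₁) ((hc1 i).symm.mono fun ω h _ => h)
      have e2 : ∫ ω in x₂ ⁻¹' B, x₂ ω i ∂μ = ∫ ω in x₂ ⁻¹' B, x ω i ∂μ := by
        rw [← setIntegral_condExp hm₂ (hxint i) hA₂]
        exact setIntegral_congr_ae (hm₂ _ hA₂) ((hc2 i).symm.mono fun ω h _ => h)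
      have key1 : ∫ p in xhat ⁻¹' B, xhat p i ∂μ'
          = t * ∫ ω in x₁ ⁻¹' B, x₁ ω i ∂μ + (1 - t) * ∫ ω in x₂ ⁻¹' B, x₂ ω i ∂μ := by
        rw [hres]
        exact mix_integral (μ.restrict (x₁ ⁻¹' B)) (μ.restrict (x₂ ⁻¹' B)) ht0 ht1
          (fun p => xhat p i) ((measurable_pi_apply i).comp hxhatm)
          ((hx₁int i).integrableOn) ((hx₂int i).integrableOn)
      have key2 : ∫ p in xhat ⁻¹' B, x' p i ∂μ'
          = t * ∫ ω in x₁ ⁻¹' B, x ω i ∂μ + (1 - t) * ∫ ω in x₂ ⁻¹' B, x ω i ∂μ := by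
        rw [hres]
        exact mix_integral (μ.restrict (x₁ ⁻¹' B)) (μ.restrict (x₂ ⁻¹' B)) ht0 ht1
          (fun p => x' p i) ((measurable_pi_apply i).comp hx'm)
          ((hxint i).integrableOn) ((hxint i).integrableOn)
      rw [key1, key2, e1, e2]
    · have hxhatm' : Measurable[MeasurableSpace.comap xhat inferInstance] xhat :=
        Measurable.of_comap_le le_rfl
      exact StronglyMeasurable.aestronglyMeasurable
        (((measurable_pi_apply i).comp hxhatm').stronglyMeasurable)
  · -- covariance
    intro j k
    rw [hμ']
    exact mix_integral μ μ ht0 ht1 (fun p => xhat p j * xhat p k)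
      (((measurable_pi_apply j).comp hxhatm).mul ((measurable_pi_apply k).comp hxhatm))
      (hmul _ _ (hL2x₁ j) (hL2x₁ k)) (hmul _ _ (hL2x₂ j) (hL2x₂ k))
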